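/- arXiv:1302.6029 — 4 statements merged into one kernel-verified Lean document; each statement's English description precedes it below -/
import Mathlib

section
/- For X a Pareto(α) random variable with α ∈ (1,2), the Laplace transform satisfies E(e^{-λX}) = 1 - μλ - Γ(1-α)λ^α + o(λ^α) as λ → 0⁺, where μ = α/(α-1). -/
/-!
Write `φ(u) = e^{-u} - 1 + u`. The Pareto law has mass `1` and mean `μ = α/(α-1)`, so the
substitution `y = λx` gives `E e^{-λX} = 1 - μλ + λ^α ∫_λ^∞ φ(y) α y^{-α-1} dy`. As `λ → 0⁺`
the last integral tends to `∫_0^∞ φ(y) α y^{-α-1} dy`, and two integrations by parts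
against powers of `y` turn it into `∫_0^∞ e^{-y} y^{1-α} dy / (α-1) = Γ(2-α)/(α-1)`,
which is `-Γ(1-α)`. All integrands and boundary terms are controlled by `min(y,1) y^s`,
thanks to `0 ≤ 1 - e^{-y} ≤ min(y,1)` and `0 ≤ φ(y) ≤ y min(y,1)`.
-/

open MeasureTheory Set Real Asymptotics Filter Topology

lemma one_sub_exp_neg_nonneg {y : ℝ} (hy : 0 ≤ y) : 0 ≤ 1 - exp (-y) := by
  linarith [exp_le_one_iff.mpr (neg_nonpos.mpr hy)]

lemma one_sub_exp_neg_le_min (y : ℝ) : 1 - exp (-y) ≤ min y 1 :=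
  le_min (by linarith [add_one_le_exp (-y)]) (by linarith [exp_pos (-y)])

lemma exp_neg_sub_one_add_nonneg (y : ℝ) : 0 ≤ exp (-y) - 1 + y := by
  linarith [add_one_le_exp (-y)]

lemma exp_neg_sub_one_add_le_mul_min {y : ℝ} (hy : 0 ≤ y) :
    exp (-y) - 1 + y ≤ y * min y 1 := by
  rcases le_total y 1 with hy1 | hy1
  · have h := abs_exp_sub_one_sub_id_le (x := -y) (by rwa [abs_neg, abs_of_nonneg hy])
    rw [min_eq_left hy1]
    nlinarith [(abs_le.mp h).2]
  · rw [min_eq_right hy1, mul_one]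
    linarith [exp_le_one_iff.mpr (neg_nonpos.mpr hy)]

lemma min_one_mul_rpow_eqOn_Ioc {s : ℝ} :
    EqOn (fun y : ℝ => min y 1 * y ^ s) (fun y => y ^ (s + 1)) (Ioc 0 1) := fun y hy => by
  simp only [min_eq_left hy.2, rpow_add hy.1, rpow_one, mul_comm]

lemma min_one_mul_rpow_eqOn_Ici {s : ℝ} :
    EqOn (fun y : ℝ => min y 1 * y ^ s) (fun y => y ^ s) (Ici 1) := fun y hy => by
  simp only [min_eq_right (mem_Ici.mp hy), one_mul]

lemma integrableOn_min_one_mul_rpow {s : ℝ} (h2 : -2 < s) (h1 : s < -1) :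
    IntegrableOn (fun y : ℝ => min y 1 * y ^ s) (Ioi 0) := by
  rw [← Ioc_union_Ioi_eq_Ioi zero_le_one]
  refine IntegrableOn.union ?_ ?_
  · refine IntegrableOn.congr_fun ?_ min_one_mul_rpow_eqOn_Ioc.symm measurableSet_Ioc
    rw [← intervalIntegrable_iff_integrableOn_Ioc_of_le zero_le_one]
    exact intervalIntegral.intervalIntegrable_rpow' (by linarith)
  · exact (integrableOn_Ioi_rpow_of_lt h1 one_pos).congr_fun
      (min_one_mul_rpow_eqOn_Ici.symm.mono Ioi_subset_Ici_self) measurableSet_Ioi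

lemma tendsto_min_one_mul_rpow_nhdsGT_zero {s : ℝ} (hs : -1 < s) :
    Tendsto (fun y : ℝ => min y 1 * y ^ s) (𝓝[>] 0) (𝓝 0) := by
  have h : Tendsto (fun y : ℝ => y ^ (s + 1)) (𝓝[>] 0) (𝓝 0) := by
    simpa [zero_rpow (by linarith : s + 1 ≠ 0)] using
      ((continuousAt_rpow_const 0 (s + 1) (Or.inr (by linarith))).tendsto).mono_left
        nhdsWithin_le_nhds
  refine h.congr' ?_
  filter_upwards [Ioc_mem_nhdsGT zero_lt_one] with y hy using
    (min_one_mul_rpow_eqOn_Ioc hy).symm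

lemma tendsto_min_one_mul_rpow_atTop {s : ℝ} (hs : s < 0) :
    Tendsto (fun y : ℝ => min y 1 * y ^ s) atTop (𝓝 0) := by
  refine (by simpa using tendsto_rpow_neg_atTop (neg_pos.mpr hs) :
    Tendsto (fun y : ℝ => y ^ s) atTop (𝓝 0)).congr' ?_
  filter_upwards [eventually_ge_atTop 1] with y hy using (min_one_mul_rpow_eqOn_Ici hy).symm

lemma norm_one_sub_exp_neg_mul_rpow_le {y : ℝ} (hy : 0 < y) (s : ℝ) :
    ‖(1 - exp (-y)) * y ^ s‖ ≤ min y 1 * y ^ s := by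
  rw [norm_mul, norm_of_nonneg (one_sub_exp_neg_nonneg hy.le), norm_of_nonneg (by positivity)]
  exact mul_le_mul_of_nonneg_right (one_sub_exp_neg_le_min y) (by positivity)

lemma norm_exp_neg_sub_one_add_mul_rpow_le {y : ℝ} (hy : 0 < y) (s : ℝ) :
    ‖(exp (-y) - 1 + y) * y ^ (s - 1)‖ ≤ min y 1 * y ^ s := by
  rw [norm_mul, norm_of_nonneg (exp_neg_sub_one_add_nonneg y), norm_of_nonneg (by positivity)]
  calc (exp (-y) - 1 + y) * y ^ (s - 1) ≤ y * min y 1 * y ^ (s - 1) :=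
        mul_le_mul_of_nonneg_right (exp_neg_sub_one_add_le_mul_min hy.le) (by positivity)
    _ = min y 1 * y ^ s := by
        rw [mul_comm y, mul_assoc, rpow_sub_one hy.ne', mul_div_cancel₀ _ hy.ne']

section MinOneMulRpowBound

variable {f : ℝ → ℝ} {s : ℝ} (hf : ∀ y ∈ Ioi (0 : ℝ), ‖f y‖ ≤ min y 1 * y ^ s)
include hf

lemma integrableOn_of_norm_le_min_one_mul_rpow (h2 : -2 < s) (h1 : s < -1)
    (hcont : ContinuousOn f (Ioi 0)) : IntegrableOn f (Ioi 0) :=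
  (integrableOn_min_one_mul_rpow h2 h1).mono' (hcont.aestronglyMeasurable measurableSet_Ioi)
    ((ae_restrict_iff' measurableSet_Ioi).mpr (Eventually.of_forall hf))

lemma tendsto_nhdsGT_zero_of_norm_le_min_one_mul_rpow (hs : -1 < s) :
    Tendsto f (𝓝[>] 0) (𝓝 0) :=
  squeeze_zero_norm' (eventually_nhdsWithin_of_forall hf)
    (tendsto_min_one_mul_rpow_nhdsGT_zero hs)

lemma tendsto_atTop_of_norm_le_min_one_mul_rpow (hs : s < 0) : Tendsto f atTop (𝓝 0) :=
  squeeze_zero_norm' ((eventually_gt_atTop 0).mono hf) (tendsto_min_one_mul_rpow_atTop hs)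

end MinOneMulRpowBound

lemma integral_Ioi_deriv_mul_rpow {u u' : ℝ → ℝ} {s : ℝ}
    (hu : ∀ x ∈ Ioi (0 : ℝ), HasDerivAt u (u' x) x)
    (hu' : IntegrableOn (fun x => u' x * x ^ s) (Ioi 0))
    (hu_int : IntegrableOn (fun x => u x * x ^ (s - 1)) (Ioi 0))
    (h_zero : Tendsto (fun x => u x * x ^ s) (𝓝[>] 0) (𝓝 0))
    (h_infty : Tendsto (fun x => u x * x ^ s) atTop (𝓝 0)) :
    ∫ x in Ioi 0, u' x * x ^ s = -s * ∫ x in Ioi 0, u x * x ^ (s - 1) := by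
  have hv : ∀ x ∈ Ioi (0 : ℝ), HasDerivAt (fun x => x ^ s) (s * x ^ (s - 1)) x :=
    fun x hx => hasDerivAt_rpow_const (Or.inl (ne_of_gt hx))
  have huv' : IntegrableOn (fun x => u x * (s * x ^ (s - 1))) (Ioi 0) := by
    refine (hu_int.const_mul s).congr (Eventually.of_forall fun x => ?_)
    ring
  have h := integral_Ioi_mul_deriv_eq_deriv_mul hu hv huv' hu' h_zero h_infty
  simp only [mul_left_comm _ s, integral_const_mul] at h
  linarith

lemma integral_Ioi_comp_mul_left_mul_rpow (f : ℝ → ℝ) {a l : ℝ} (ha : 0 ≤ a) (hl : 0 < l)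
    (s : ℝ) :
    ∫ x in Ioi a, f (l * x) * x ^ s = l ^ (-s - 1) * ∫ y in Ioi (l * a), f y * y ^ s := by
  have hscale : ∀ x ∈ Ioi a, f (l * x) * x ^ s = l ^ (-s) * (f (l * x) * (l * x) ^ s) :=
    fun x hx => by
      rw [mul_rpow hl.le (ha.trans (le_of_lt hx)), rpow_neg hl.le]
      field_simp
  rw [setIntegral_congr_fun measurableSet_Ioi hscale, integral_const_mul,
    integral_comp_mul_left_Ioi (fun y => f y * y ^ s) a hl, smul_eq_mul, ← mul_assoc,
    rpow_sub_one hl.ne', div_eq_mul_inv]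

lemma tendsto_setIntegral_Ioi_nhdsGT {f : ℝ → ℝ} {a : ℝ} (hf : IntegrableOn f (Ioi a)) :
    Tendsto (fun b => ∫ x in Ioi b, f x) (𝓝[>] a) (𝓝 (∫ x in Ioi a, f x)) := by
  have hprim : Tendsto (fun b => ∫ x in a..b, f x) (𝓝[>] a) (𝓝 0) := by
    have h := intervalIntegral.continuousWithinAt_primitive (a := a) (b₀ := a) (b₁ := a)
      (b₂ := a + 1) (measure_singleton a) (by
        rw [min_self, max_eq_right (by linarith)]
        exact (intervalIntegrable_iff_integrableOn_Ioc_of_le (by linarith)).mpr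
          (hf.mono_set Ioc_subset_Ioi_self))
    simpa using h.tendsto.mono_left (nhdsWithin_le_of_mem
      (mem_of_superset (Ioc_mem_nhdsGT (lt_add_one a)) Ioc_subset_Icc_self))
  refine (by simpa using tendsto_const_nhds.sub hprim :
    Tendsto (fun b => (∫ x in Ioi a, f x) - ∫ x in a..b, f x) _ _).congr' ?_
  filter_upwards [self_mem_nhdsWithin] with b hb
  rw [← intervalIntegral.integral_Ioi_sub_Ioi hf (le_of_lt hb), sub_sub_cancel]

section ParetoRange

variable {α : ℝ} (h1 : 1 < α) (h2 : α < 2)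
include h1 h2

lemma integrableOn_one_sub_exp_neg_mul_rpow :
    IntegrableOn (fun y => (1 - exp (-y)) * y ^ (-α)) (Ioi 0) :=
  integrableOn_of_norm_le_min_one_mul_rpow (fun y hy => norm_one_sub_exp_neg_mul_rpow_le hy _)
    (by linarith) (by linarith)
    ((by fun_prop : Continuous fun y => 1 - exp (-y)).continuousOn.mul
      (continuousOn_id.rpow_const fun y hy => Or.inl (ne_of_gt hy)))

lemma integral_one_sub_exp_neg_mul_rpow :
    ∫ y in Ioi 0, (1 - exp (-y)) * y ^ (-α) = -Gamma (1 - α) := by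
  have hbound :
      ∀ y ∈ Ioi (0 : ℝ), ‖(1 - exp (-y)) * y ^ (1 - α)‖ ≤ min y 1 * y ^ (1 - α) :=
    fun y hy => norm_one_sub_exp_neg_mul_rpow_le hy _
  have hGamma : ∫ y in Ioi 0, exp (-y) * y ^ (1 - α) = Gamma (2 - α) := by
    rw [Gamma_eq_integral (by linarith)]
    ring_nf
  have hibp := integral_Ioi_deriv_mul_rpow (u := fun y => 1 - exp (-y)) (s := 1 - α)
    (fun y _ => by simpa using ((hasDerivAt_neg y).exp).const_sub 1)
    (by rw [show 1 - α = 2 - α - 1 by ring]; exact GammaIntegral_convergent (by linarith))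
    (by simpa only [sub_sub_cancel_left] using integrableOn_one_sub_exp_neg_mul_rpow h1 h2)
    (tendsto_nhdsGT_zero_of_norm_le_min_one_mul_rpow hbound (by linarith))
    (tendsto_atTop_of_norm_le_min_one_mul_rpow hbound (by linarith))
  rw [hGamma, sub_sub_cancel_left, show 2 - α = 1 - α + 1 by ring,
    Gamma_add_one (by linarith)] at hibp
  have : 1 - α ≠ 0 := by linarith
  field_simp at hibp
  linarith

lemma integrableOn_exp_neg_sub_one_add_mul_rpow :
    IntegrableOn (fun y => (exp (-y) - 1 + y) * y ^ (-α - 1)) (Ioi 0) :=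
  integrableOn_of_norm_le_min_one_mul_rpow
    (fun y hy => norm_exp_neg_sub_one_add_mul_rpow_le hy _) (by linarith) (by linarith)
    ((by fun_prop : Continuous fun y => exp (-y) - 1 + y).continuousOn.mul
      (continuousOn_id.rpow_const fun y hy => Or.inl (ne_of_gt hy)))

lemma integrableOn_exp_neg_sub_one_add_mul_pareto :
    IntegrableOn (fun y => (exp (-y) - 1 + y) * (α * y ^ (-(α + 1)))) (Ioi 0) :=
  ((integrableOn_exp_neg_sub_one_add_mul_rpow h1 h2).const_mul α).congr
    (Eventually.of_forall fun y => by simp only [neg_add']; ring)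

lemma integral_exp_neg_sub_one_add_mul_pareto :
    ∫ y in Ioi 0, (exp (-y) - 1 + y) * (α * y ^ (-(α + 1))) = -Gamma (1 - α) := by
  have hbound :
      ∀ y ∈ Ioi (0 : ℝ), ‖(exp (-y) - 1 + y) * y ^ (-α)‖ ≤ min y 1 * y ^ (1 - α) :=
    fun y hy => by
      simpa only [sub_sub_cancel_left] using norm_exp_neg_sub_one_add_mul_rpow_le hy (1 - α)
  have hibp := integral_Ioi_deriv_mul_rpow (u := fun y => exp (-y) - 1 + y) (s := -α)
    (fun y _ => ((((hasDerivAt_neg y).exp).sub_const 1).add (hasDerivAt_id' y)).congr_deriv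
      (by ring))
    (integrableOn_one_sub_exp_neg_mul_rpow h1 h2)
    (integrableOn_exp_neg_sub_one_add_mul_rpow h1 h2)
    (tendsto_nhdsGT_zero_of_norm_le_min_one_mul_rpow hbound (by linarith))
    (tendsto_atTop_of_norm_le_min_one_mul_rpow hbound (by linarith))
  simp only [mul_left_comm _ α, integral_const_mul, neg_add']
  rw [integral_one_sub_exp_neg_mul_rpow h1 h2, neg_neg] at hibp
  linarith

end ParetoRange

lemma integral_exp_neg_mul_pareto_eq {α : ℝ} (h1 : 1 < α) {l : ℝ} (hl : 0 < l) :
    ∫ x in Ioi 1, exp (-(l * x)) * (α * x ^ (-(α + 1))) =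
      1 - α / (α - 1) * l +
        l ^ α * ∫ y in Ioi l, (exp (-y) - 1 + y) * (α * y ^ (-(α + 1))) := by
  have hα : α ≠ 0 := by linarith
  set d : ℝ → ℝ := fun x => α * x ^ (-(α + 1))
  have hd_int : IntegrableOn d (Ioi 1) :=
    (integrableOn_Ioi_rpow_of_lt (by linarith) one_pos).const_mul α
  have hxd : EqOn (fun x => x * d x) (fun x => α * x ^ (-α)) (Ioi 1) := fun x hx => by
    have hx0 : x ≠ 0 := (zero_lt_one.trans hx).ne'
    simp only [d, neg_add', rpow_sub_one hx0]
    field_simp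
  have hxd_int : IntegrableOn (fun x => x * d x) (Ioi 1) :=
    IntegrableOn.congr_fun
      ((integrableOn_Ioi_rpow_of_lt (by linarith : -α < -1) one_pos).const_mul α) hxd.symm
      measurableSet_Ioi
  have hed_int : IntegrableOn (fun x => exp (-(l * x)) * d x) (Ioi 1) := by
    refine hd_int.bdd_mul (c := 1) (by fun_prop) ?_
    filter_upwards [ae_restrict_mem measurableSet_Ioi] with x hx
    rw [norm_of_nonneg (exp_pos _).le, exp_le_one_iff, neg_nonpos]
    exact mul_nonneg hl.le (zero_le_one.trans (le_of_lt hx))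
  have hd_val : ∫ x in Ioi 1, d x = 1 := by
    rw [integral_const_mul, integral_Ioi_rpow_of_lt (by linarith) one_pos, one_rpow,
      show -(α + 1) + 1 = -α by ring, neg_div_neg_eq, mul_one_div_cancel hα]
  have hxd_val : ∫ x in Ioi 1, x * d x = α / (α - 1) := by
    rw [setIntegral_congr_fun measurableSet_Ioi hxd, integral_const_mul,
      integral_Ioi_rpow_of_lt (by linarith) one_pos, one_rpow,
      show -α + 1 = -(α - 1) by ring, neg_div_neg_eq, mul_one_div]
  have hsplit : ∫ x in Ioi 1, (exp (-(l * x)) - 1 + l * x) * d x =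
      (∫ x in Ioi 1, exp (-(l * x)) * d x) - (∫ x in Ioi 1, d x) +
        l * ∫ x in Ioi 1, x * d x := by
    rw [setIntegral_congr_fun measurableSet_Ioi
        (g := fun x => (exp (-(l * x)) * d x - d x) + l * (x * d x)) fun x _ => by ring,
      integral_add (f := fun x => exp (-(l * x)) * d x - d x) (hed_int.sub hd_int)
        (hxd_int.const_mul l),
      integral_sub hed_int hd_int, integral_const_mul l]
  have hscale := integral_Ioi_comp_mul_left_mul_rpow (fun y => (exp (-y) - 1 + y) * α)
    zero_le_one hl (-(α + 1))
  simp only [mul_assoc, mul_one, neg_neg, add_sub_cancel_right] at hscale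
  rw [hscale, hd_val, hxd_val] at hsplit
  linarith

/-- For `X` Pareto(α) with `α ∈ (1,2)` and `μ = α/(α-1)`,
`E(e^{-λX}) = 1 - μλ - Γ(1-α)λ^α + o(λ^α)` as `λ → 0⁺`. -/
theorem pareto_laplace_transform_asymptotic_one_two (α : ℝ) (hα1 : 1 < α) (hα2 : α < 2) :
    (fun l : ℝ =>
        (∫ x in Ioi (1 : ℝ), Real.exp (-(l * x)) * (α * x ^ (-(α + 1)))) -
          (1 - (α / (α - 1)) * l - Gamma (1 - α) * l ^ α)) =o[𝓝[>] (0 : ℝ)]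
      fun l : ℝ => l ^ α := by
  have htail :=
    tendsto_setIntegral_Ioi_nhdsGT (integrableOn_exp_neg_sub_one_add_mul_pareto hα1 hα2)
  rw [integral_exp_neg_sub_one_add_mul_pareto hα1 hα2] at htail
  have hremainder : Tendsto (fun l =>
      (∫ y in Ioi l, (exp (-y) - 1 + y) * (α * y ^ (-(α + 1)))) + Gamma (1 - α))
      (𝓝[>] 0) (𝓝 0) := by
    simpa using htail.add_const (Gamma (1 - α))
  refine ((isLittleO_one_iff ℝ).mpr hremainder |>.mul_isBigO (isBigO_refl (fun l => l ^ α) _)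
    |>.congr' ?_ (Eventually.of_forall fun l => one_mul _))
  filter_upwards [self_mem_nhdsWithin] with l hl
  rw [integral_exp_neg_mul_pareto_eq hα1 hl]
  ring
end

section
/- For α ∈ (0,1) and β < α, the transition probabilities P_{i,j} = (i!/j!) α^{j-1} (Γ(1-β)/Γ(1-β/α)) (Γ(j-β/α)/Γ(i-β)) Σ*_{i₁+...+i_j=i, i_l≥1} Π_{l=1}^j Γ(i_l-α)/(Γ(1-α) i_l!) satisfy Σ_{j=1}^i P_{i,j} = 1 for every i ≥ 1. -/
open Real Finset

/-- Sum over compositions of `i` into `j` positive parts of products of `g` over the parts. -/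
noncomputable def starSum (j i : ℕ) (g : ℕ → ℝ) : ℝ :=
  ∑ f ∈ (Finset.Nat.antidiagonalTuple j i).filter (fun f => ∀ l, 0 < f l),
    ∏ l, g (f l)

/-- Transition probabilities (P4) of the discrete Poisson-Dirichlet(α,-β) coalescent. -/
noncomputable def PDtrans (α β : ℝ) (i j : ℕ) : ℝ :=
  ((i.factorial : ℝ) / (j.factorial : ℝ)) * α ^ (j - 1) *
    (Gamma (1 - β) / Gamma (1 - β / α)) * (Gamma ((j : ℝ) - β / α) / Gamma ((i : ℝ) - β)) *
    starSum j i (fun m => Gamma ((m : ℝ) - α) / (Gamma (1 - α) * (m.factorial : ℝ)))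

/-!
Write `S(j, i) = starSum j i w` for the weights `w m = Γ(m - α) / (Γ(1 - α) m!)`, which satisfy
`w 1 = 1` and `(m + 1) w (m + 1) = (m - α) w m`. Marking a part `l` of a composition of `i + 1`
and splitting according to whether that part is `1` (delete it) or at least `2` (lower it by one)
gives `(i + 1) S(j+1, i+1) = (i - (j+1)α) S(j+1, i) + (j+1) S(j, i)`. With the Gamma recursions for
the remaining factors this becomes
`(i - β) P(i+1, k+1) = (i - (k+1)α) P(i, k+1) + (kα - β) P(i, k)`;
summing over `k`, the coefficients of each `P(i, k)` add up to `i - β`, so the row sum of row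
`i + 1` equals that of row `i`, and row `1` is `P(1, 1) = 1`.
-/

def compositionTuples (j i : ℕ) : Finset (Fin j → ℕ) :=
  (Finset.Nat.antidiagonalTuple j i).filter (fun f => ∀ l, 0 < f l)

theorem mem_compositionTuples {j i : ℕ} {f : Fin j → ℕ} :
    f ∈ compositionTuples j i ↔ ∑ l, f l = i ∧ ∀ l, 0 < f l := by
  simp [compositionTuples, Finset.Nat.mem_antidiagonalTuple]

theorem starSum_eq_sum_compositionTuples (j i : ℕ) (w : ℕ → ℝ) :
    starSum j i w = ∑ f ∈ compositionTuples j i, ∏ l, w (f l) := rfl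

theorem compositionTuples_eq_empty_of_lt {j i : ℕ} (h : i < j) : compositionTuples j i = ∅ := by
  refine eq_empty_of_forall_notMem fun f hf => ?_
  obtain ⟨hsum, hpos⟩ := mem_compositionTuples.1 hf
  have : j ≤ i := by
    calc j = ∑ _l : Fin j, 1 := by simp
      _ ≤ ∑ l, f l := sum_le_sum fun l _ => hpos l
      _ = i := hsum
  omega

theorem compositionTuples_zero_left {i : ℕ} (hi : i ≠ 0) : compositionTuples 0 i = ∅ := by
  refine eq_empty_of_forall_notMem fun f hf => hi ?_
  simpa using (mem_compositionTuples.1 hf).1.symm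

theorem starSum_of_lt {j i : ℕ} (h : i < j) (w : ℕ → ℝ) : starSum j i w = 0 := by
  rw [starSum_eq_sum_compositionTuples, compositionTuples_eq_empty_of_lt h, sum_empty]

theorem starSum_zero_left {i : ℕ} (hi : i ≠ 0) (w : ℕ → ℝ) : starSum 0 i w = 0 := by
  rw [starSum_eq_sum_compositionTuples, compositionTuples_zero_left hi, sum_empty]

theorem starSum_one_one (w : ℕ → ℝ) : starSum 1 1 w = w 1 := by
  rw [starSum, Nat.antidiagonalTuple_one, filter_singleton, if_pos (by simp)]
  simp

theorem update_mem_compositionTuples {j n : ℕ} {f : Fin j → ℕ} {l : Fin j} {v : ℕ}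
    (hpos : ∀ m, 0 < f m) (hv : 0 < v) (hsum : ∑ m, f m + v = n + f l) :
    Function.update f l v ∈ compositionTuples j n := by
  refine mem_compositionTuples.2 ⟨?_, fun m => ?_⟩
  · have := add_sum_erase univ f (mem_univ l)
    rw [sum_update_of_mem (mem_univ l), sdiff_singleton_eq_erase]
    omega
  · rcases eq_or_ne m l with rfl | hm
    · simpa using hv
    · simpa [Function.update_of_ne hm] using hpos m

theorem sum_compositionTuples_filter_ne_one {M : Type*} [AddCommMonoid M] (j i : ℕ) (l : Fin j)
    (F : (Fin j → ℕ) → M) :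
    ∑ f ∈ (compositionTuples j (i + 1)).filter (fun f => f l ≠ 1), F f =
      ∑ f ∈ compositionTuples j i, F (Function.update f l (f l + 1)) := by
  have inc_dec : ∀ f ∈ (compositionTuples j (i + 1)).filter (fun f => f l ≠ 1),
      Function.update (Function.update f l (f l - 1)) l (f l - 1 + 1) = f := by
    intro f hf
    rw [Nat.sub_add_cancel ((mem_compositionTuples.1 (mem_filter.1 hf).1).2 l)]
    simp
  refine sum_nbij' (fun f => Function.update f l (f l - 1)) (fun f => Function.update f l (f l + 1))
    (fun f hf => ?_) (fun f hf => ?_) (fun f hf => by simpa using inc_dec f hf)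
    (fun f _ => by simp) (fun f hf => by simpa using congrArg F (inc_dec f hf).symm)
  · obtain ⟨hf, hl⟩ := mem_filter.1 hf
    obtain ⟨hsum, hpos⟩ := mem_compositionTuples.1 hf
    have := hpos l
    exact update_mem_compositionTuples hpos (by omega) (by omega)
  · obtain ⟨hsum, hpos⟩ := mem_compositionTuples.1 hf
    exact mem_filter.2
      ⟨update_mem_compositionTuples hpos (by omega) (by omega), by simpa using (hpos l).ne'⟩

theorem sum_compositionTuples_filter_eq_one {M : Type*} [AddCommMonoid M] (j i : ℕ)
    (l : Fin (j + 1)) (F : (Fin (j + 1) → ℕ) → M) :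
    ∑ f ∈ (compositionTuples (j + 1) (i + 1)).filter (fun f => f l = 1), F f =
      ∑ f ∈ compositionTuples j i, F (l.insertNth 1 f) := by
  refine sum_nbij' (fun f => l.removeNth f) (fun f => l.insertNth 1 f) ?_ ?_ ?_ ?_ ?_
  · intro f hf
    simp only [mem_filter, mem_compositionTuples] at hf ⊢
    obtain ⟨⟨hsum, hpos⟩, hl⟩ := hf
    rw [Fin.sum_univ_succAbove _ l, hl] at hsum
    exact ⟨by simp only [Fin.removeNth]; omega, fun m => hpos _⟩
  · intro f hf
    simp only [mem_filter, mem_compositionTuples] at hf ⊢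
    obtain ⟨hsum, hpos⟩ := hf
    refine ⟨⟨by simp [Fin.sum_univ_succAbove _ l, hsum, add_comm], ?_⟩, by simp⟩
    rw [Fin.forall_iff_succAbove l]
    simpa using hpos
  · intro f hf
    rw [mem_filter] at hf
    simp [← hf.2]
  · intro f _
    simp
  · intro f hf
    rw [mem_filter] at hf
    simp [← hf.2]

theorem sum_sum_compositionTuples_sub_mul (w : ℕ → ℝ) (c : ℝ) (j i : ℕ) :
    ∑ l : Fin j, ∑ f ∈ compositionTuples j i, ((f l : ℝ) - c) * ∏ m, w (f m) =
      ((i : ℝ) - j * c) * starSum j i w := by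
  rw [sum_comm, starSum_eq_sum_compositionTuples, mul_sum]
  refine sum_congr rfl fun f hf => ?_
  rw [← sum_mul, sum_sub_distrib, ← Nat.cast_sum, (mem_compositionTuples.1 hf).1]
  simp

section Weights

variable {α : ℝ} {w : ℕ → ℝ}

theorem sum_compositionTuples_succ_apply_mul_prod (hw1 : w 1 = 1)
    (hw : ∀ m : ℕ, 0 < m → ((m : ℝ) + 1) * w (m + 1) = ((m : ℝ) - α) * w m)
    (j i : ℕ) (l : Fin (j + 1)) :
    ∑ f ∈ compositionTuples (j + 1) (i + 1), (f l : ℝ) * ∏ m, w (f m) =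
      ∑ f ∈ compositionTuples (j + 1) i, ((f l : ℝ) - α) * ∏ m, w (f m) + starSum j i w := by
  rw [← sum_filter_not_add_sum_filter _ (fun f => f l = 1), sum_compositionTuples_filter_ne_one,
    sum_compositionTuples_filter_eq_one, starSum_eq_sum_compositionTuples]
  congr 1
  · refine sum_congr rfl fun f hf => ?_
    simp only [Fin.prod_univ_succAbove _ l, Function.update_self,
      Function.update_of_ne (Fin.succAbove_ne l _)]
    push_cast
    rw [← mul_assoc, ← mul_assoc, hw _ ((mem_compositionTuples.1 hf).2 l)]
  · simp [Fin.prod_univ_succAbove _ l, hw1]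

theorem succ_mul_starSum_succ_succ (hw1 : w 1 = 1)
    (hw : ∀ m : ℕ, 0 < m → ((m : ℝ) + 1) * w (m + 1) = ((m : ℝ) - α) * w m) (j i : ℕ) :
    ((i : ℝ) + 1) * starSum (j + 1) (i + 1) w =
      ((i : ℝ) - (j + 1) * α) * starSum (j + 1) i w + (j + 1) * starSum j i w := by
  calc ((i : ℝ) + 1) * starSum (j + 1) (i + 1) w
      = ∑ l : Fin (j + 1), ∑ f ∈ compositionTuples (j + 1) (i + 1),
          ((f l : ℝ) - 0) * ∏ m, w (f m) := by
        rw [sum_sum_compositionTuples_sub_mul]; push_cast; ring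
    _ = ∑ l : Fin (j + 1), (∑ f ∈ compositionTuples (j + 1) i,
          ((f l : ℝ) - α) * ∏ m, w (f m) + starSum j i w) := by
        simp only [sub_zero, sum_compositionTuples_succ_apply_mul_prod hw1 hw]
    _ = ((i : ℝ) - (j + 1) * α) * starSum (j + 1) i w + (j + 1) * starSum j i w := by
        rw [sum_add_distrib, sum_sum_compositionTuples_sub_mul]
        simp

end Weights

noncomputable def pdWeight (α : ℝ) (m : ℕ) : ℝ :=
  Gamma ((m : ℝ) - α) / (Gamma (1 - α) * (m.factorial : ℝ))

theorem pdWeight_one {α : ℝ} (hα : α < 1) : pdWeight α 1 = 1 := by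
  have : Gamma (1 - α) ≠ 0 := (Gamma_pos_of_pos (by linarith)).ne'
  simp [pdWeight, this]

theorem succ_mul_pdWeight_succ {α : ℝ} (hα : α < 1) {m : ℕ} (hm : 0 < m) :
    ((m : ℝ) + 1) * pdWeight α (m + 1) = ((m : ℝ) - α) * pdWeight α m := by
  have hmα : (m : ℝ) - α ≠ 0 := by
    have : (1 : ℝ) ≤ m := by exact_mod_cast hm
    linarith
  have hm1 : (m : ℝ) + 1 ≠ 0 := by positivity
  rw [pdWeight, pdWeight, Nat.factorial_succ, Nat.cast_succ, add_sub_right_comm,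
    Gamma_add_one hmα]
  push_cast
  field_simp

noncomputable def pdRowFactor (α β : ℝ) (i : ℕ) : ℝ :=
  i.factorial * Gamma (1 - β) / (Gamma (1 - β / α) * Gamma ((i : ℝ) - β))

noncomputable def pdColFactor (α β : ℝ) (j : ℕ) : ℝ :=
  α ^ (j - 1) * Gamma ((j : ℝ) - β / α) / j.factorial

theorem PDtrans_eq_mul (α β : ℝ) (i j : ℕ) :
    PDtrans α β i j = pdRowFactor α β i * pdColFactor α β j * starSum j i (pdWeight α) := by
  change _ * starSum j i (pdWeight α) = _
  rw [pdRowFactor, pdColFactor]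
  ring

theorem sub_mul_pdRowFactor_succ {α β : ℝ} {i : ℕ} (hi : (i : ℝ) ≠ β) :
    ((i : ℝ) - β) * pdRowFactor α β (i + 1) = ((i : ℝ) + 1) * pdRowFactor α β i := by
  rw [pdRowFactor, pdRowFactor, Nat.factorial_succ, Nat.cast_succ, add_sub_right_comm,
    Gamma_add_one (sub_ne_zero.2 hi)]
  push_cast
  field_simp

theorem succ_mul_pdColFactor_succ {α β : ℝ} (hα : α ≠ 0) {k : ℕ} (hk : k ≠ 0)
    (hkβ : (k : ℝ) ≠ β / α) :
    ((k : ℝ) + 1) * pdColFactor α β (k + 1) = ((k : ℝ) * α - β) * pdColFactor α β k := by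
  obtain ⟨n, rfl⟩ := Nat.exists_eq_succ_of_ne_zero hk
  rw [pdColFactor, pdColFactor, Nat.factorial_succ, Nat.cast_succ (n + 1), add_sub_right_comm,
    Gamma_add_one (sub_ne_zero.2 hkβ)]
  simp only [Nat.add_sub_cancel, pow_succ]
  push_cast
  field_simp

section Transition

variable {α β : ℝ}

theorem PDtrans_zero_right {i : ℕ} (hi : i ≠ 0) : PDtrans α β i 0 = 0 := by
  rw [PDtrans_eq_mul, starSum_zero_left hi, mul_zero]

theorem PDtrans_of_lt {i j : ℕ} (h : i < j) : PDtrans α β i j = 0 := by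
  rw [PDtrans_eq_mul, starSum_of_lt h, mul_zero]

theorem PDtrans_one_one (hα0 : 0 < α) (hα1 : α < 1) (hβ : β < α) : PDtrans α β 1 1 = 1 := by
  have h1 : Gamma (1 - β) ≠ 0 := (Gamma_pos_of_pos (by linarith)).ne'
  have h2 : Gamma (1 - β / α) ≠ 0 :=
    (Gamma_pos_of_pos (sub_pos.2 ((div_lt_one hα0).2 hβ))).ne'
  rw [PDtrans_eq_mul, starSum_one_one, pdWeight_one hα1, pdRowFactor, pdColFactor]
  simp only [Nat.factorial_one, Nat.cast_one, Nat.sub_self, pow_zero, one_mul, div_one, mul_one]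
  rw [div_mul_eq_mul_div, div_eq_one_iff_eq (mul_ne_zero h2 h1), mul_comm]

theorem sub_mul_PDtrans_succ_succ (hα0 : 0 < α) (hα1 : α < 1) (hβ : β < α) {i : ℕ} (hi : 1 ≤ i)
    (k : ℕ) :
    ((i : ℝ) - β) * PDtrans α β (i + 1) (k + 1) =
      ((i : ℝ) - (k + 1) * α) * PDtrans α β i (k + 1) + ((k : ℝ) * α - β) * PDtrans α β i k := by
  have hS := succ_mul_starSum_succ_succ (pdWeight_one hα1)
    (fun m hm => succ_mul_pdWeight_succ hα1 hm) k i
  have hR : ((i : ℝ) - β) * pdRowFactor α β (i + 1) = ((i : ℝ) + 1) * pdRowFactor α β i := by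
    have hi1 : (1 : ℝ) ≤ i := by exact_mod_cast hi
    exact sub_mul_pdRowFactor_succ (ne_of_gt (by linarith))
  have hC : ((k : ℝ) + 1) * pdColFactor α β (k + 1) * starSum k i (pdWeight α) =
      ((k : ℝ) * α - β) * pdColFactor α β k * starSum k i (pdWeight α) := by
    rcases eq_or_ne k 0 with rfl | hk
    · simp [starSum_zero_left (Nat.one_le_iff_ne_zero.1 hi)]
    · have hk1 : (1 : ℝ) ≤ k := by exact_mod_cast Nat.one_le_iff_ne_zero.2 hk
      have hkβ : (k : ℝ) ≠ β / α := ne_of_gt (by linarith [(div_lt_one hα0).2 hβ])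
      rw [succ_mul_pdColFactor_succ hα0.ne' hk hkβ]
  simp only [PDtrans_eq_mul]
  linear_combination pdColFactor α β (k + 1) * starSum (k + 1) (i + 1) (pdWeight α) * hR
    + pdRowFactor α β i * pdColFactor α β (k + 1) * hS + pdRowFactor α β i * hC

theorem sum_PDtrans_succ (hα0 : 0 < α) (hα1 : α < 1) (hβ : β < α) {i : ℕ} (hi : 1 ≤ i) :
    ∑ j ∈ Icc 1 (i + 1), PDtrans α β (i + 1) j = ∑ j ∈ Icc 1 i, PDtrans α β i j := by
  have hi1 : (1 : ℝ) ≤ i := by exact_mod_cast hi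
  have hiβ : (i : ℝ) - β ≠ 0 := by linarith
  have shift (n : ℕ) (F : ℕ → ℝ) : ∑ j ∈ Icc 1 n, F j = ∑ k ∈ range n, F (k + 1) := by
    rw [range_eq_Ico, sum_Ico_add', Ico_add_one_right_eq_Icc, zero_add]
  refine mul_left_cancel₀ hiβ ?_
  rw [shift, shift, mul_sum]
  simp_rw [sub_mul_PDtrans_succ_succ hα0 hα1 hβ hi]
  rw [sum_add_distrib, sum_range_succ, sum_range_succ', PDtrans_of_lt (Nat.lt_succ_self i),
    PDtrans_zero_right (Nat.one_le_iff_ne_zero.1 hi), mul_zero, mul_zero, add_zero, add_zero,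
    mul_sum]
  refine sum_add_distrib.symm.trans (sum_congr rfl fun k _ => ?_)
  push_cast
  ring

end Transition

/-- For `α ∈ (0,1)` and `β < α`, the transition probabilities (P4) of the
Poisson-Dirichlet(α,-β) coalescent are a stochastic matrix: `Σ_{j=1}^i P_{i,j} = 1`. -/
theorem PD_transition_row_sum_one (α β : ℝ) (hα0 : 0 < α) (hα1 : α < 1) (hβ : β < α)
    (i : ℕ) (hi : 1 ≤ i) :
    ∑ j ∈ Finset.Icc 1 i, PDtrans α β i j = 1 := by
  induction i, hi using Nat.le_induction with
  | base => simpa using PDtrans_one_one hα0 hα1 hβ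
  | succ i hi ih => rw [sum_PDtrans_succ hα0 hα1 hβ hi, ih]
end

section
/- For the limiting case α = 0 with β < 0, the Poisson-Dirichlet(0,-β) coalescent transition probabilities are P_{i,j} = ((-β)^j Γ(-β)/Γ(i-β)) s_{i,j}, where s_{i,j} = (i!/j!) Σ*_{i₁+...+i_j=i} Π_l (1/i_l) are the unsigned Stirling numbers of the first kind, and Σ_{j=1}^i P_{i,j} = 1. -/
/-!
Put `L = -log (1 - X) = ∑_{m ≥ 1} X ^ m / m`. The composition sum defining `s_{i,j}` is the
coefficient of `X ^ i` in `L ^ j`, so `s_{i,j} = (i! / j!) [X ^ i] L ^ j`. Differentiating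
`L ^ (j + 1)` and using `(1 - X) L' = 1` yields the Stirling recurrence
`s_{i+1,j+1} = i s_{i,j+1} + s_{i,j}`, so the `s_{i,j}` are the coefficients of the rising
factorial `x (x + 1) ⋯ (x + i - 1)`. At `x = -β > 0` this rising factorial is `Γ(i - β) / Γ(-β)`,
which is exactly the normalisation in `P_{i,j}`.
-/

open Real Finset

/-- The unsigned Stirling numbers of the first kind:
`s_{i,j} = (i!/j!) Σ*_{i₁+...+i_j=i} Π_l 1/i_l` (sum over compositions into positive parts). -/
noncomputable def stirlingFirst (i j : ℕ) : ℝ :=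
  ((i.factorial : ℝ) / (j.factorial : ℝ)) * starSum j i (fun m => 1 / (m : ℝ))

/-- Transition probabilities of the Poisson-Dirichlet(0,-β) coalescent:
`P_{i,j} = ((-β)^j Γ(-β)/Γ(i-β)) s_{i,j}`. -/
noncomputable def PDzeroTrans (β : ℝ) (i j : ℕ) : ℝ :=
  (-β) ^ j * Gamma (-β) / Gamma ((i : ℝ) - β) * stirlingFirst i j

open Polynomial in
theorem ascPochhammer_coeff_eq_stirlingFirst (n k : ℕ) :
    (ascPochhammer ℕ n).coeff k = Nat.stirlingFirst n k := by
  induction n generalizing k with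
  | zero => cases k <;> simp [coeff_one]
  | succ n ih =>
    rw [ascPochhammer_succ_right, mul_add, coeff_add, ← C_eq_natCast, coeff_mul_C]
    cases k with
    | zero => cases n <;> simp [ih]
    | succ k => rw [coeff_mul_X, ih, ih, Nat.stirlingFirst_succ_succ, Nat.cast_id]; ring

open Polynomial in
theorem ascPochhammer_eval_eq_sum_stirlingFirst {S : Type*} [CommSemiring S] (n : ℕ) (x : S) :
    (ascPochhammer S n).eval x = ∑ k ∈ range (n + 1), (Nat.stirlingFirst n k : S) * x ^ k := by
  rw [← ascPochhammer_map (Nat.castRingHom S), eval_map, eval₂_eq_sum_range,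
    ascPochhammer_natDegree]
  simp [ascPochhammer_coeff_eq_stirlingFirst]

namespace PowerSeries

theorem coeff_pow_eq_sum_antidiagonalTuple {R : Type*} [CommSemiring R] (k n : ℕ) (φ : R⟦X⟧) :
    coeff n (φ ^ k) = ∑ f ∈ Nat.antidiagonalTuple k n, ∏ l, coeff (f l) φ := by
  rw [← Fin.prod_const, coeff_prod, ← piAntidiag_univ_fin_eq_antidiagonalTuple, finsuppAntidiag,
    sum_map, ← sum_attach (piAntidiag univ n)]
  rfl

/-- `-log (1 - X) = ∑_{m ≥ 1} X ^ m / m`, the constant term being the junk value `0⁻¹ = 0`. -/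
noncomputable def negLogOneSub (K : Type*) [Field K] : K⟦X⟧ :=
  mk fun m => (m : K)⁻¹

@[simp]
theorem coeff_negLogOneSub {K : Type*} [Field K] (n : ℕ) : coeff n (negLogOneSub K) = (n : K)⁻¹ :=
  coeff_mk _ _

@[simp]
theorem constantCoeff_negLogOneSub {K : Type*} [Field K] : constantCoeff (negLogOneSub K) = 0 := by
  rw [← coeff_zero_eq_constantCoeff_apply, coeff_negLogOneSub, Nat.cast_zero, inv_zero]

variable {K : Type*} [Field K] [CharZero K]

theorem derivative_negLogOneSub : d⁄dX K (negLogOneSub K) = mk 1 := by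
  ext n
  rw [coeff_derivative, coeff_negLogOneSub, coeff_mk, Pi.one_apply, Nat.cast_add_one,
    inv_mul_cancel₀ n.cast_add_one_ne_zero]

/-- The coefficient form of `(1 - X) (L ^ (j + 1))' = (j + 1) L ^ j`, where `(1 - X) L' = 1`. -/
theorem coeff_pow_negLogOneSub_succ_succ (i j : ℕ) :
    (i + 1) * coeff (i + 1) (negLogOneSub K ^ (j + 1)) =
      i * coeff i (negLogOneSub K ^ (j + 1)) + (j + 1) * coeff i (negLogOneSub K ^ j) := by
  have hode : (1 - X) * d⁄dX K (negLogOneSub K ^ (j + 1)) = (j + 1) • negLogOneSub K ^ j := by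
    rw [derivative_pow, derivative_negLogOneSub, Nat.add_sub_cancel, mul_comm, mul_assoc,
      mk_one_mul_one_sub_eq_one, mul_one, nsmul_eq_mul]
  have hX : coeff i (X * d⁄dX K (negLogOneSub K ^ (j + 1))) =
      i * coeff i (negLogOneSub K ^ (j + 1)) := by
    cases i with
    | zero => simp
    | succ n => rw [coeff_succ_X_mul, coeff_derivative, mul_comm, Nat.cast_add_one]
  have := congrArg (coeff i) hode
  rw [sub_mul, one_mul, map_sub, hX, coeff_derivative, map_nsmul, nsmul_eq_mul] at this
  push_cast at this
  linear_combination this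

end PowerSeries

open PowerSeries

/-- Since `1 / 0 = 0` in `ℝ`, allowing parts equal to zero does not change the sum. -/
theorem starSum_one_div_eq_coeff_pow (j i : ℕ) :
    starSum j i (fun m => 1 / (m : ℝ)) = coeff i (negLogOneSub ℝ ^ j) := by
  simp only [starSum, coeff_pow_eq_sum_antidiagonalTuple, coeff_negLogOneSub, one_div]
  apply sum_filter_of_ne
  intro f _ hf l
  by_contra! hl
  exact hf (prod_eq_zero (mem_univ l) (by simp [Nat.le_zero.mp hl]))

theorem stirlingFirst_eq_coeff_pow (i j : ℕ) :
    stirlingFirst i j = i.factorial / j.factorial * coeff i (negLogOneSub ℝ ^ j) := by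
  rw [stirlingFirst, starSum_one_div_eq_coeff_pow]

theorem stirlingFirst_succ_succ (i j : ℕ) :
    stirlingFirst (i + 1) (j + 1) = i * stirlingFirst i (j + 1) + stirlingFirst i j := by
  have hrec := coeff_pow_negLogOneSub_succ_succ (K := ℝ) i j
  simp only [stirlingFirst_eq_coeff_pow, Nat.factorial_succ, Nat.cast_mul, Nat.cast_add_one]
  field_simp
  exact hrec

theorem stirlingFirst_eq_natCast_stirlingFirst :
    ∀ i j : ℕ, stirlingFirst i j = Nat.stirlingFirst i j
  | 0, 0 => by simp [stirlingFirst_eq_coeff_pow]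
  | 0, j + 1 => by simp [stirlingFirst_eq_coeff_pow]
  | i + 1, 0 => by simp [stirlingFirst_eq_coeff_pow, coeff_one]
  | i + 1, j + 1 => by
    rw [stirlingFirst_succ_succ, Nat.stirlingFirst_succ_succ,
      stirlingFirst_eq_natCast_stirlingFirst, stirlingFirst_eq_natCast_stirlingFirst]
    push_cast
    ring

theorem Real.Gamma_add_nat_eq_mul_ascPochhammer {x : ℝ} (hx : ∀ k : ℕ, x + k ≠ 0) (n : ℕ) :
    Gamma (x + n) = Gamma x * (ascPochhammer ℝ n).eval x := by
  induction n with
  | zero => simp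
  | succ n ih =>
    rw [Nat.cast_add_one, ← add_assoc, Gamma_add_one (hx n), ih, ascPochhammer_succ_eval]
    ring

/-- For `β < 0`, the Poisson-Dirichlet(0,-β) transition probabilities
`P_{i,j} = ((-β)^j Γ(-β)/Γ(i-β)) s_{i,j}` sum to one: `Σ_{j=1}^i P_{i,j} = 1`. -/
theorem PD_zero_transition_row_sum_one (β : ℝ) (hβ : β < 0) (i : ℕ) (hi : 1 ≤ i) :
    ∑ j ∈ Finset.Icc 1 i, PDzeroTrans β i j = 1 := by
  have hβ' : 0 < -β := neg_pos.mpr hβ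
  have hGamma : Gamma ((i : ℝ) - β) = Gamma (-β) * (ascPochhammer ℝ i).eval (-β) := by
    rw [sub_eq_neg_add]
    exact Gamma_add_nat_eq_mul_ascPochhammer
      (fun k => (add_pos_of_pos_of_nonneg hβ' k.cast_nonneg).ne') i
  have hpoch : (ascPochhammer ℝ i).eval (-β) = ∑ j ∈ Icc 1 i, (-β) ^ j * stirlingFirst i j := by
    rw [ascPochhammer_eval_eq_sum_stirlingFirst, range_eq_Ico,
      sum_eq_sum_Ico_succ_bot i.add_one_pos, zero_add, Ico_add_one_right_eq_Icc]
    obtain ⟨n, rfl⟩ := Nat.exists_eq_add_of_le' hi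
    simp [stirlingFirst_eq_natCast_stirlingFirst, mul_comm]
  have hsum : ∑ j ∈ Icc 1 i, PDzeroTrans β i j =
      Gamma (-β) / Gamma ((i : ℝ) - β) * ∑ j ∈ Icc 1 i, (-β) ^ j * stirlingFirst i j := by
    rw [mul_sum]
    exact sum_congr rfl fun j _ => by rw [PDzeroTrans]; ring
  have hpos : 0 < Gamma ((i : ℝ) - β) := Gamma_pos_of_pos (by linarith)
  rw [hsum, ← hpoch, div_mul_eq_mul_div, ← hGamma, div_self hpos.ne']
end

section
/- For X Pareto(α) with α ∈ (0,1), integer i ≥ 1, and λ → 0⁺, the moment E(X^i e^{-λX}) satisfies E(X^i e^{-λX}) ~ α Γ(i-α) λ^{α-i}. -/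
open MeasureTheory Set Real Asymptotics Filter Topology

/-! With `s = i - α > 0` the integrand is `α x^(s-1) e^(-λx)`. Over `(0, ∞)` its integral is
`α Γ(s) λ^(-s)`, which blows up as `λ → 0⁺`, while the part over `(0, 1]` that the Pareto
support cuts off stays bounded by `α ∫₀¹ x^(s-1) dx`. -/

section

variable {s l : ℝ}

theorem integrableOn_rpow_mul_exp_neg_mul_Ioi (hs : 0 < s) (hl : 0 < l) :
    IntegrableOn (fun x : ℝ => x ^ (s - 1) * exp (-(l * x))) (Ioi 0) := by
  simpa [rpow_one] using
    integrableOn_rpow_mul_exp_neg_mul_rpow (p := 1) (by linarith : -1 < s - 1) one_pos hl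

theorem integral_Ioi_one_rpow_mul_exp_neg_mul (hs : 0 < s) (hl : 0 < l) :
    ∫ x in Ioi 1, x ^ (s - 1) * exp (-(l * x)) =
      Gamma s * l ^ (-s) - ∫ x in Ioc 0 1, x ^ (s - 1) * exp (-(l * x)) := by
  have hint := integrableOn_rpow_mul_exp_neg_mul_Ioi hs hl
  have hsplit := setIntegral_union (Ioc_disjoint_Ioi le_rfl) measurableSet_Ioi
    (hint.mono_set Ioc_subset_Ioi_self) (hint.mono_set (Ioi_subset_Ioi zero_le_one))
  rw [Ioc_union_Ioi_eq_Ioi zero_le_one, integral_rpow_mul_exp_neg_mul_Ioi hs hl, one_div,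
    inv_rpow hl.le, ← rpow_neg hl.le] at hsplit
  linarith

theorem norm_integral_Ioc_rpow_mul_exp_neg_mul_le (hs : 0 < s) (hl : 0 ≤ l) :
    ‖∫ x in Ioc 0 1, x ^ (s - 1) * exp (-(l * x))‖ ≤ ∫ x in Ioc 0 1, x ^ (s - 1) := by
  have hint : IntegrableOn (fun x : ℝ => x ^ (s - 1)) (Ioc 0 1) :=
    (intervalIntegrable_iff_integrableOn_Ioc_of_le zero_le_one).mp
      (intervalIntegral.intervalIntegrable_rpow' (by linarith))
  refine norm_integral_le_of_norm_le hint <| (ae_restrict_iff' measurableSet_Ioc).mpr <|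
    ae_of_all _ fun x hx => ?_
  have hexp : exp (-(l * x)) ≤ 1 := exp_le_one_iff.mpr (by nlinarith [hx.1])
  rw [norm_mul, norm_of_nonneg (rpow_nonneg hx.1.le _), norm_of_nonneg (exp_pos _).le]
  exact mul_le_of_le_one_right (rpow_nonneg hx.1.le _) hexp

theorem integral_Ioi_one_rpow_mul_exp_neg_mul_isEquivalent (hs : 0 < s) :
    (fun l => ∫ x in Ioi 1, x ^ (s - 1) * exp (-(l * x))) ~[𝓝[>] 0]
      fun l => Gamma s * l ^ (-s) := by
  have htop : Tendsto (fun l : ℝ => Gamma s * l ^ (-s)) (𝓝[>] 0) atTop :=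
    (tendsto_rpow_neg_nhdsGT_zero (neg_neg_of_pos hs)).const_mul_atTop (Gamma_pos_of_pos hs)
  have hbdd : (fun l => ∫ x in Ioc 0 1, x ^ (s - 1) * exp (-(l * x))) =O[𝓝[>] 0]
      fun _ => (1 : ℝ) := .of_bound _ <| by
    filter_upwards [self_mem_nhdsWithin] with l (hl : 0 < l)
    simpa using norm_integral_Ioc_rpow_mul_exp_neg_mul_le hs hl.le
  have hsmall := hbdd.trans_isLittleO <|
    isLittleO_const_left.mpr (Or.inr (tendsto_norm_atTop_atTop.comp htop))
  refine (IsEquivalent.refl.sub_isLittleO hsmall).congr_left ?_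
  filter_upwards [self_mem_nhdsWithin] with l hl
  exact (integral_Ioi_one_rpow_mul_exp_neg_mul hs hl).symm

end

theorem pareto_integrand_eq {α l x : ℝ} (i : ℕ) (hx : 0 < x) :
    x ^ i * exp (-(l * x)) * (α * x ^ (-(α + 1))) =
      α * (x ^ (((i : ℝ) - α) - 1) * exp (-(l * x))) := by
  rw [← rpow_natCast, show ((i : ℝ) - α) - 1 = i + -(α + 1) by ring, rpow_add hx]
  ring

theorem pareto_moment_laplace_asymptotic_general (α : ℝ) (hα1 : α < 1)
    (i : ℕ) (hi : 1 ≤ i) :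
    (fun l : ℝ =>
        ∫ x in Ioi (1 : ℝ), x ^ i * Real.exp (-(l * x)) * (α * x ^ (-(α + 1)))) ~[𝓝[>] (0 : ℝ)]
      fun l : ℝ => α * Gamma ((i : ℝ) - α) * l ^ (α - i) := by
  have hs : 0 < (i : ℝ) - α := by
    have : (1 : ℝ) ≤ i := by exact_mod_cast hi
    linarith
  have hequiv := (IsEquivalent.refl (u := fun _ : ℝ => α)).mul
    (integral_Ioi_one_rpow_mul_exp_neg_mul_isEquivalent hs)
  refine (hequiv.congr_left (.of_eq ?_)).congr_right (.of_eq ?_)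
  · ext l
    rw [Pi.mul_apply, ← integral_const_mul]
    exact setIntegral_congr_fun measurableSet_Ioi fun x hx =>
      (pareto_integrand_eq i (zero_lt_one.trans hx)).symm
  · ext l
    simp only [Pi.mul_apply, neg_sub, mul_assoc]

/-- For `X` Pareto(α), `α ∈ (0,1)`, integer `i ≥ 1`:
`E(X^i e^{-λX}) ~ α Γ(i-α) λ^{α-i}` as `λ → 0⁺`. -/
theorem pareto_moment_laplace_asymptotic (α : ℝ) (hα0 : 0 < α) (hα1 : α < 1)
    (i : ℕ) (hi : 1 ≤ i) :
    (fun l : ℝ =>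
        ∫ x in Ioi (1 : ℝ), x ^ i * Real.exp (-(l * x)) * (α * x ^ (-(α + 1)))) ~[𝓝[>] (0 : ℝ)]
      fun l : ℝ => α * Gamma ((i : ℝ) - α) * l ^ (α - i) :=
  pareto_moment_laplace_asymptotic_general α hα1 i hi
end
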